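/- arXiv:math/9811166 — 2 statements merged into one kernel-verified Lean document; each statement's English description precedes it below -/
import Mathlib

section
/- Let k ∈ ℝ, n ≥ 2, and let Φ : (0, b) → ℝ be differentiable satisfying Φ' + Φ²/(n−1) + (n−1)k ≤ 0 on (0, b) and lim_{t→0⁺} t·Φ(t) = n−1. Let Φ_c(t) = (n−1)·c_c(t)/s_c(t) where c = −k (so Φ_c solves Φ_c' + Φ_c²/(n−1) + (n−1)k = 0 with lim_{t→0⁺} t·Φ_c(t) = n−1, on its maximal interval of positivity of s_c). Then Φ(t) ≤ Φ_c(t) for all t in (0, b) where s_c(t) > 0. -/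
open Real Set Filter

/-- The generalized sine function `s_c`. -/
noncomputable def sgen (c t : ℝ) : ℝ :=
  if c < 0 then Real.sin (Real.sqrt (-c) * t) / Real.sqrt (-c)
  else if c = 0 then t
  else Real.sinh (Real.sqrt c * t) / Real.sqrt c

/-- The generalized cosine function `c_c`. -/
noncomputable def cgen (c t : ℝ) : ℝ :=
  if c < 0 then Real.cos (Real.sqrt (-c) * t)
  else if c = 0 then 1
  else Real.cosh (Real.sqrt c * t)

lemma sgen_zero (c : ℝ) : sgen c 0 = 0 := by
  unfold sgen; split_ifs <;> simp

lemma cgen_zero (c : ℝ) : cgen c 0 = 1 := by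
  unfold cgen; split_ifs <;> simp

lemma hasDerivAt_sgen (c t : ℝ) : HasDerivAt (fun t => sgen c t) (cgen c t) t := by
  rcases lt_trichotomy c 0 with h | h | h
  · have hr : (0:ℝ) < Real.sqrt (-c) := Real.sqrt_pos.2 (by linarith)
    have hd : HasDerivAt (fun t : ℝ => Real.sin (Real.sqrt (-c) * t) / Real.sqrt (-c))
        ((Real.cos (Real.sqrt (-c) * t) * (Real.sqrt (-c) * 1)) / Real.sqrt (-c)) t :=
      (((Real.hasDerivAt_sin _).comp t ((hasDerivAt_id t).const_mul _))).div_const _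
    simp only [sgen, cgen, if_pos h]
    convert hd using 1
    field_simp
  · subst h
    simp only [sgen, cgen, lt_irrefl, if_neg (lt_irrefl (0:ℝ)), if_pos rfl]
    simpa using (hasDerivAt_id' t)
  · have hr : (0:ℝ) < Real.sqrt c := Real.sqrt_pos.2 h
    have hd : HasDerivAt (fun t : ℝ => Real.sinh (Real.sqrt c * t) / Real.sqrt c)
        ((Real.cosh (Real.sqrt c * t) * (Real.sqrt c * 1)) / Real.sqrt c) t :=
      (((Real.hasDerivAt_sinh _).comp t ((hasDerivAt_id t).const_mul _))).div_const _
    simp only [sgen, cgen, if_neg (not_lt.2 h.le), if_neg h.ne']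
    convert hd using 1
    field_simp

lemma hasDerivAt_cgen (c t : ℝ) : HasDerivAt (fun t => cgen c t) (c * sgen c t) t := by
  rcases lt_trichotomy c 0 with h | h | h
  · have hr : (0:ℝ) < Real.sqrt (-c) := Real.sqrt_pos.2 (by linarith)
    have hsq : Real.sqrt (-c) ^ 2 = -c := Real.sq_sqrt (by linarith)
    have hd : HasDerivAt (fun t : ℝ => Real.cos (Real.sqrt (-c) * t))
        (-Real.sin (Real.sqrt (-c) * t) * (Real.sqrt (-c) * 1)) t :=
      (Real.hasDerivAt_cos _).comp t ((hasDerivAt_id t).const_mul _)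
    simp only [sgen, cgen, if_pos h]
    convert hd using 1
    field_simp
    linear_combination (Real.sin (Real.sqrt (-c) * t)) * hsq
  · subst h
    simp only [sgen, cgen, lt_irrefl, if_neg (lt_irrefl (0:ℝ)), if_pos rfl]
    simpa using (hasDerivAt_const t (1:ℝ))
  · have hr : (0:ℝ) < Real.sqrt c := Real.sqrt_pos.2 h
    have hsq : Real.sqrt c ^ 2 = c := Real.sq_sqrt h.le
    have hd : HasDerivAt (fun t : ℝ => Real.cosh (Real.sqrt c * t))
        (Real.sinh (Real.sqrt c * t) * (Real.sqrt c * 1)) t :=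
      (Real.hasDerivAt_cosh _).comp t ((hasDerivAt_id t).const_mul _)
    simp only [sgen, cgen, if_neg (not_lt.2 h.le), if_neg h.ne']
    convert hd using 1
    field_simp
    linear_combination (-Real.sinh (Real.sqrt c * t)) * hsq

/-- Scalar Riccati comparison: if `Φ' + Φ²/(n−1) + (n−1)k ≤ 0` on `(0,b)` and
`t·Φ(t) → n−1` as `t → 0⁺`, then `Φ(t) ≤ Φ_c(t) = (n−1)·c_c(t)/s_c(t)` with `c = −k`,
at every `t ∈ (0,b)` where `s_c(t) > 0`. -/
theorem stmt_3 (n : ℕ) (hn : 2 ≤ n) (k b : ℝ) (hb : 0 < b) (Φ Φ' : ℝ → ℝ)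
    (hderiv : ∀ t ∈ Ioo (0:ℝ) b, HasDerivAt Φ (Φ' t) t)
    (hriccati : ∀ t ∈ Ioo (0:ℝ) b,
      Φ' t + (Φ t) ^ 2 / ((n : ℝ) - 1) + ((n : ℝ) - 1) * k ≤ 0)
    (hlim : Tendsto (fun t => t * Φ t) (nhdsWithin 0 (Ioi 0)) (nhds ((n : ℝ) - 1))) :
    ∀ t ∈ Ioo (0:ℝ) b, 0 < sgen (-k) t →
      Φ t ≤ ((n : ℝ) - 1) * cgen (-k) t / sgen (-k) t := by
  intro t ht hst
  have hn2 : (2:ℝ) ≤ (n:ℝ) := by exact_mod_cast hn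
  have hn0 : (0:ℝ) < (n:ℝ) - 1 := by linarith
  set F : ℝ → ℝ := fun x => (sgen (-k) x)^2 * Φ x - ((n:ℝ)-1) * sgen (-k) x * cgen (-k) x
    with hFdef
  have hFderiv : ∀ x ∈ Ioo (0:ℝ) b, HasDerivAt F
      (2 * sgen (-k) x * cgen (-k) x * Φ x + (sgen (-k) x)^2 * Φ' x
        - ((n:ℝ)-1) * (cgen (-k) x * cgen (-k) x + sgen (-k) x * ((-k) * sgen (-k) x))) x := by
    intro x hx
    have hs := hasDerivAt_sgen (-k) x
    have hcg := hasDerivAt_cgen (-k) x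
    have hphi := hderiv x hx
    have h1 := ((hs.pow 2).mul hphi).sub ((hs.const_mul ((n:ℝ)-1)).mul hcg)
    refine h1.congr_deriv ?_
    simp only [Pi.pow_apply]
    push_cast
    ring
  have hF' : ∀ x ∈ interior (Ioo (0:ℝ) b), deriv F x ≤ 0 := by
    rw [interior_Ioo]
    intro x hx
    rw [(hFderiv x hx).deriv]
    have hr := hriccati x hx
    have hr' : ((n:ℝ)-1) * Φ' x + (Φ x)^2 + ((n:ℝ)-1)^2 * k ≤ 0 := by
      have h2 : ((n:ℝ)-1) * (Φ' x + (Φ x) ^ 2 / ((n : ℝ) - 1) + ((n : ℝ) - 1) * k) ≤ 0 :=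
        mul_nonpos_of_nonneg_of_nonpos hn0.le hr
      have h3 : ((n:ℝ)-1) * ((Φ x) ^ 2 / ((n : ℝ) - 1)) = (Φ x)^2 := by
        field_simp
      nlinarith [h2, h3]
    have hmul : (sgen (-k) x)^2 * (((n:ℝ)-1) * Φ' x + (Φ x)^2 + ((n:ℝ)-1)^2 * k) ≤ 0 :=
      mul_nonpos_of_nonneg_of_nonpos (sq_nonneg _) hr'
    nlinarith [hmul, sq_nonneg (sgen (-k) x * Φ x - ((n:ℝ)-1) * cgen (-k) x), hn0]
  have hcont : ContinuousOn F (Ioo (0:ℝ) b) := fun x hx =>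
    ((hFderiv x hx).continuousAt).continuousWithinAt
  have hdiff : DifferentiableOn ℝ F (interior (Ioo (0:ℝ) b)) := by
    rw [interior_Ioo]
    exact fun x hx => (hFderiv x hx).differentiableAt.differentiableWithinAt
  have hanti : AntitoneOn F (Ioo (0:ℝ) b) :=
    antitoneOn_of_deriv_nonpos (convex_Ioo _ _) hcont hdiff hF'
  -- limit of F at 0⁺ is 0
  have hs0 : Tendsto (fun x => sgen (-k) x) (nhdsWithin 0 (Ioi 0)) (nhds 0) := by
    have := (hasDerivAt_sgen (-k) 0).continuousAt.continuousWithinAt (s := Ioi (0:ℝ))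
    simpa [ContinuousWithinAt, sgen_zero] using this
  have hc0 : Tendsto (fun x => cgen (-k) x) (nhdsWithin 0 (Ioi 0)) (nhds 1) := by
    have := (hasDerivAt_cgen (-k) 0).continuousAt.continuousWithinAt (s := Ioi (0:ℝ))
    simpa [ContinuousWithinAt, cgen_zero] using this
  have hslope : Tendsto (fun x => sgen (-k) x / x) (nhdsWithin 0 (Ioi 0)) (nhds 1) := by
    have h := hasDerivAt_iff_tendsto_slope.1 (hasDerivAt_sgen (-k) 0)
    rw [cgen_zero] at h
    have h2 := h.mono_left (nhdsWithin_mono 0 (fun x hx => ne_of_gt hx : Ioi (0:ℝ) ⊆ {(0:ℝ)}ᶜ))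
    refine h2.congr (fun x => ?_)
    simp [slope_def_field, sgen_zero, div_eq_div_iff]
  have hF0 : Tendsto F (nhdsWithin 0 (Ioi 0)) (nhds 0) := by
    have hmain : Tendsto (fun x => (sgen (-k) x / x) * (x * Φ x) * sgen (-k) x
        - ((n:ℝ)-1) * sgen (-k) x * cgen (-k) x) (nhdsWithin 0 (Ioi 0))
        (nhds (1 * ((n:ℝ)-1) * 0 - ((n:ℝ)-1) * 0 * 1)) :=
      ((hslope.mul hlim).mul hs0).sub ((tendsto_const_nhds.mul hs0).mul hc0)
    have heq : ∀ᶠ x in nhdsWithin (0:ℝ) (Ioi 0),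
        (sgen (-k) x / x) * (x * Φ x) * sgen (-k) x
          - ((n:ℝ)-1) * sgen (-k) x * cgen (-k) x = F x := by
      filter_upwards [self_mem_nhdsWithin] with x hx
      have hx0 : x ≠ 0 := ne_of_gt hx
      rw [hFdef]
      field_simp
    have := hmain.congr' heq
    simpa using this
  have hFt : F t ≤ 0 := by
    have hev : ∀ᶠ x in nhdsWithin (0:ℝ) (Ioi 0), F t ≤ F x := by
      filter_upwards [Ioo_mem_nhdsGT_of_mem ⟨le_refl 0, ht.1⟩] with x hx
      exact hanti ⟨hx.1, hx.2.trans ht.2⟩ ht hx.2.le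
    exact ge_of_tendsto hF0 hev
  rw [le_div_iff₀ hst]
  have hFt' : (sgen (-k) t)^2 * Φ t - ((n:ℝ)-1) * sgen (-k) t * cgen (-k) t ≤ 0 := hFt
  nlinarith [hFt', hst, mul_pos hst hst]
end

section
/- Let f, g : (0, b) → ℝ be positive integrable functions such that F(t)/G(t) is non-increasing, where F(r) = ∫₀^r f and G(r) = ∫₀^r g. Then r ↦ F(r)/G(r) being non-increasing follows from t ↦ f(t)/g(t) being non-increasing. -/
open Set MeasureTheory intervalIntegral

/-- Scalar ratio monotonicity lemma: if `f, g` are positive integrable functions on `(0,b)`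
and `t ↦ f(t)/g(t)` is non-increasing on `(0,b)`, then `r ↦ F(r)/G(r)` is non-increasing
on `(0,b)`, where `F(r) = ∫₀^r f` and `G(r) = ∫₀^r g`. -/
theorem stmt_8 (b : ℝ) (hb : 0 < b) (f g : ℝ → ℝ)
    (hfpos : ∀ t ∈ Ioo (0:ℝ) b, 0 < f t)
    (hgpos : ∀ t ∈ Ioo (0:ℝ) b, 0 < g t)
    (hfint : IntegrableOn f (Ioo (0:ℝ) b))
    (hgint : IntegrableOn g (Ioo (0:ℝ) b))
    (hmono : ∀ t₁ ∈ Ioo (0:ℝ) b, ∀ t₂ ∈ Ioo (0:ℝ) b, t₁ ≤ t₂ →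
      f t₂ / g t₂ ≤ f t₁ / g t₁) :
    ∀ r₁ ∈ Ioo (0:ℝ) b, ∀ r₂ ∈ Ioo (0:ℝ) b, r₁ ≤ r₂ →
      (∫ t in (0:ℝ)..r₂, f t) / (∫ t in (0:ℝ)..r₂, g t) ≤
      (∫ t in (0:ℝ)..r₁, f t) / (∫ t in (0:ℝ)..r₁, g t) := by
  intro r₁ hr₁ r₂ hr₂ hr
  obtain ⟨hr₁0, hr₁b⟩ := hr₁
  obtain ⟨hr₂0, hr₂b⟩ := hr₂
  set c := f r₁ / g r₁ with hc
  have hcpos : 0 < c := div_pos (hfpos r₁ ⟨hr₁0, hr₁b⟩) (hgpos r₁ ⟨hr₁0, hr₁b⟩)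
  -- interval integrability
  have hsub1 : Ioo (0:ℝ) r₁ ⊆ Ioo 0 b := Ioo_subset_Ioo le_rfl hr₁b.le
  have hsub2 : Ioo (0:ℝ) r₂ ⊆ Ioo 0 b := Ioo_subset_Ioo le_rfl hr₂b.le
  have hsub3 : Ioo r₁ r₂ ⊆ Ioo (0:ℝ) b := Ioo_subset_Ioo hr₁0.le hr₂b.le
  have hfi1 : IntervalIntegrable f volume 0 r₁ :=
    (intervalIntegrable_iff_integrableOn_Ioo_of_le hr₁0.le).mpr (hfint.mono_set hsub1)
  have hgi1 : IntervalIntegrable g volume 0 r₁ :=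
    (intervalIntegrable_iff_integrableOn_Ioo_of_le hr₁0.le).mpr (hgint.mono_set hsub1)
  have hfi2 : IntervalIntegrable f volume 0 r₂ :=
    (intervalIntegrable_iff_integrableOn_Ioo_of_le hr₂0.le).mpr (hfint.mono_set hsub2)
  have hgi2 : IntervalIntegrable g volume 0 r₂ :=
    (intervalIntegrable_iff_integrableOn_Ioo_of_le hr₂0.le).mpr (hgint.mono_set hsub2)
  have hfi3 : IntervalIntegrable f volume r₁ r₂ :=
    (intervalIntegrable_iff_integrableOn_Ioo_of_le hr).mpr (hfint.mono_set hsub3)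
  have hgi3 : IntervalIntegrable g volume r₁ r₂ :=
    (intervalIntegrable_iff_integrableOn_Ioo_of_le hr).mpr (hgint.mono_set hsub3)
  -- positivity of the integrals
  have hG1 : 0 < ∫ t in (0:ℝ)..r₁, g t :=
    intervalIntegral_pos_of_pos_on hgi1 (fun x hx => hgpos x (hsub1 hx)) hr₁0
  have hG2 : 0 < ∫ t in (0:ℝ)..r₂, g t :=
    intervalIntegral_pos_of_pos_on hgi2 (fun x hx => hgpos x (hsub2 hx)) hr₂0
  have hB : 0 ≤ ∫ t in r₁..r₂, g t :=
    intervalIntegral.integral_nonneg hr (fun x hx =>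
      (hgpos x ⟨lt_of_lt_of_le hr₁0 hx.1, lt_of_le_of_lt hx.2 hr₂b⟩).le)
  -- key pointwise bounds turned into integral bounds
  -- A ≤ c * B
  have hA : (∫ t in r₁..r₂, f t) ≤ c * ∫ t in r₁..r₂, g t := by
    rw [← intervalIntegral.integral_const_mul]
    apply intervalIntegral.integral_mono_on hr hfi3 (hgi3.const_mul c)
    intro x hx
    have hxm : x ∈ Ioo (0:ℝ) b := ⟨lt_of_lt_of_le hr₁0 hx.1, lt_of_le_of_lt hx.2 hr₂b⟩
    have h := hmono r₁ ⟨hr₁0, hr₁b⟩ x hxm hx.1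
    have hgx := hgpos x hxm
    calc f x = (f x / g x) * g x := by field_simp
    _ ≤ c * g x := mul_le_mul_of_nonneg_right h hgx.le
  -- c * G₁ ≤ F₁
  have hC : c * (∫ t in (0:ℝ)..r₁, g t) ≤ ∫ t in (0:ℝ)..r₁, f t := by
    rw [intervalIntegral.integral_of_le hr₁0.le, intervalIntegral.integral_of_le hr₁0.le,
      MeasureTheory.integral_Ioc_eq_integral_Ioo, MeasureTheory.integral_Ioc_eq_integral_Ioo,
      ← MeasureTheory.integral_const_mul]
    apply MeasureTheory.setIntegral_mono_on ((hgint.mono_set hsub1).const_mul c)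
      (hfint.mono_set hsub1) measurableSet_Ioo
    intro x hx
    have hxm : x ∈ Ioo (0:ℝ) b := hsub1 hx
    have h := hmono x hxm r₁ ⟨hr₁0, hr₁b⟩ hx.2.le
    have hgx := hgpos x hxm
    calc c * g x ≤ (f x / g x) * g x := mul_le_mul_of_nonneg_right h hgx.le
    _ = f x := by field_simp
  -- split F₂ and G₂
  have hFsplit : (∫ t in (0:ℝ)..r₂, f t) = (∫ t in (0:ℝ)..r₁, f t) + ∫ t in r₁..r₂, f t :=
    (intervalIntegral.integral_add_adjacent_intervals hfi1 hfi3).symm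
  have hGsplit : (∫ t in (0:ℝ)..r₂, g t) = (∫ t in (0:ℝ)..r₁, g t) + ∫ t in r₁..r₂, g t :=
    (intervalIntegral.integral_add_adjacent_intervals hgi1 hgi3).symm
  rw [div_le_div_iff₀ hG2 hG1, hFsplit, hGsplit]
  nlinarith [hA, hC, hB, hG1.le, hcpos.le]
end
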